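/- Let a be a nonincreasing graphic integer list and a' an integer list with a ≺ a' and a ≠ a'. Then the number of simple graph realizations satisfies N_3(a) > N_3(a'): the majorized list has strictly more labeled simple graph realizations. -/

import Mathlib

open Finset

/-- Partial sum of the first `k` entries of `a`. -/
def partSum {n : ℕ} (a : Fin n → ℕ) (k : ℕ) : ℕ :=
  ∑ i : Fin n, if (i : ℕ) < k then a i else 0

/-- `a ≺ a'` : `a` is majorized by `a'`. -/
def Majorized {n : ℕ} (a a' : Fin n → ℕ) : Prop :=
  (∀ k : ℕ, partSum a k ≤ partSum a' k) ∧ ∑ i, a i = ∑ i, a' i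

/-- `a` is nonincreasing. -/
def Nonincreasing {n : ℕ} (a : Fin n → ℕ) : Prop :=
  ∀ i j : Fin n, i ≤ j → a j ≤ a i

/-- `b` is nondecreasing. -/
def Nondecreasing {n : ℕ} (b : Fin n → ℕ) : Prop :=
  ∀ i j : Fin n, i ≤ j → b i ≤ b j

/-- `a` is obtained from `a'` by a unit `(i,j)`-transfer. -/
def UnitTransfer {n : ℕ} (a' a : Fin n → ℕ) (i j : Fin n) : Prop :=
  i < j ∧ a' j + 2 ≤ a' i ∧
  a = Function.update (Function.update a' i (a' i - 1)) j (a' j + 1)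

/-- Row sum of a 0-1 matrix. -/
def rowSum {n : ℕ} (M : Fin n → Fin n → Bool) (i : Fin n) : ℕ :=
  ∑ j, if M i j then 1 else 0

/-- Column sum of a 0-1 matrix. -/
def colSum {n : ℕ} (M : Fin n → Fin n → Bool) (j : Fin n) : ℕ :=
  ∑ i, if M i j then 1 else 0

/-- Number of loop-digraph realizations of `(a,b)`:
`n×n` 0-1 matrices with row sums `b` and column sums `a`. -/
noncomputable def N1 {n : ℕ} (a b : Fin n → ℕ) : ℕ :=
  Nat.card {M : Fin n → Fin n → Bool //
    (∀ i, rowSum M i = b i) ∧ (∀ j, colSum M j = a j)}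

def LoopDigraphic {n : ℕ} (a b : Fin n → ℕ) : Prop := 0 < N1 a b

/-- Number of digraph realizations of `(a,b)`:
`n×n` 0-1 matrices with zero diagonal, row sums `b` and column sums `a`. -/
noncomputable def N2 {n : ℕ} (a b : Fin n → ℕ) : ℕ :=
  Nat.card {M : Fin n → Fin n → Bool //
    (∀ i, M i i = false) ∧ (∀ i, rowSum M i = b i) ∧ (∀ j, colSum M j = a j)}

def Digraphic {n : ℕ} (a b : Fin n → ℕ) : Prop := 0 < N2 a b

/-- Number of simple graph realizations of `a` (symmetric 0-1 adjacency matrices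
with zero diagonal and degrees `a`). -/
noncomputable def N3 {n : ℕ} (a : Fin n → ℕ) : ℕ :=
  Nat.card {M : Fin n → Fin n → Bool //
    (∀ i j, M i j = M j i) ∧ (∀ i, M i i = false) ∧ (∀ i, rowSum M i = a i)}

def Graphic {n : ℕ} (a : Fin n → ℕ) : Prop := 0 < N3 a

/-- The minconvex list for parameters `n, m`. -/
def minconvex (n m : ℕ) : Fin n → ℕ :=
  fun i => if (i : ℕ) < m % n then m / n + 1 else m / n

/-- `(a,b)` is lexicographically nonincreasing. -/
def LexNonincreasing {n : ℕ} (a b : Fin n → ℕ) : Prop :=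
  ∀ i j : Fin n, i ≤ j → (a j < a i ∨ (a i = a j ∧ b j ≤ b i))

/-!
Relabelling the vertices does not change `N3`, and sorting a list into nonincreasing order only
raises its partial sums, so `a'` may be taken nonincreasing. A nonincreasing `b ≠ a` with
`a ≺ b` admits a unit transfer (one unit moved from `b p` to a later entry `b q ≤ b p - 2`)
whose result is still nonincreasing, still majorizes `a`, and is strictly closer to `a`. So it
suffices that a unit transfer `b ↦ c` gives `N3 b < N3 c` whenever `N3 b > 0`.

For that, let `R` be the set of vertices adjacent to exactly one of `p`, `q`, and group the
realizations by everything except the edges between `R` and `{p, q}` (the group of `M` is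
represented by `rewire p q M ∅`, where all of `R` is joined to `q`). Within a group, a realization
is determined by the set `S ⊆ R` of vertices joined to `p`, and the degrees of `p` and `q` are
`w + |S|` and `w + |R| - |S|`, where `w`, the number of neighbours of `p` outside `R`, is the
same for `q`. A group therefore holds `C(|R|, x)` realizations of `b` and
`C(|R|, x - 1)` of `c`, where `2x ≥ |R| + 2`, and binomial coefficients decrease strictly past the
middle.
-/

section PartialSums

variable {n : ℕ}

lemma partSum_add (f g : Fin n → ℕ) (k : ℕ) : partSum (f + g) k = partSum f k + partSum g k := by
  rw [partSum, partSum, partSum, ← sum_add_distrib]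
  exact sum_congr rfl fun i _ => by split_ifs <;> simp

lemma partSum_single (p : Fin n) (k : ℕ) :
    partSum (Pi.single p 1) k = if (p : ℕ) < k then 1 else 0 := by
  calc partSum (Pi.single p 1) k = ∑ x, if x = p then (if (p : ℕ) < k then 1 else 0) else 0 :=
        sum_congr rfl fun x _ => by by_cases hx : x = p <;> simp [hx]
    _ = _ := by simp

lemma partSum_mono (f : Fin n → ℕ) : Monotone (partSum f) := fun k l hkl =>
  sum_le_sum fun i _ => by split_ifs <;> omega

lemma partSum_of_le (f : Fin n → ℕ) {k : ℕ} (hk : n ≤ k) : partSum f k = ∑ i, f i :=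
  sum_congr rfl fun i _ => if_pos (i.2.trans_le hk)

lemma partSum_succ (f : Fin n → ℕ) (i : Fin n) : partSum f (i + 1) = partSum f i + f i := by
  have hfi : f i = ∑ x, if x = i then f x else 0 := by simp
  rw [partSum, partSum, hfi, ← sum_add_distrib]
  refine sum_congr rfl fun x _ => ?_
  have : (x : ℕ) = i ↔ x = i := Fin.val_inj
  split_ifs <;> omega

lemma eq_of_partSum_eq {a b : Fin n → ℕ} (h : ∀ k, partSum a k = partSum b k) : a = b := by
  funext i
  have := h (i + 1)
  rw [partSum_succ, partSum_succ, h i] at this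
  omega

lemma partSum_lt_partSum {a b : Fin n → ℕ} {k : ℕ} (hle : ∀ i : Fin n, (i : ℕ) < k → a i ≤ b i)
    {p : Fin n} (hp : (p : ℕ) < k) (hlt : a p < b p) : partSum a k < partSum b k :=
  sum_lt_sum (fun i _ => by split_ifs with h; exacts [hle i h, le_rfl])
    ⟨p, mem_univ p, by simp [hp, hlt]⟩

lemma Majorized.trans {a b c : Fin n → ℕ} (hab : Majorized a b) (hbc : Majorized b c) :
    Majorized a c :=
  ⟨fun k => (hab.1 k).trans (hbc.1 k), hab.2.trans hbc.2⟩

lemma Majorized.antisymm {a b : Fin n → ℕ} (hab : Majorized a b) (hba : Majorized b a) : a = b :=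
  eq_of_partSum_eq fun k => (hab.1 k).antisymm (hba.1 k)

end PartialSums

section Sorting

variable {n : ℕ}

lemma exists_perm_nonincreasing (f : Fin n → ℕ) : ∃ σ : Equiv.Perm (Fin n), Nonincreasing (f ∘ σ) :=
  ⟨Fin.revPerm.trans (Tuple.sort f), fun i j hij => by
    simpa using Tuple.monotone_sort f (Fin.rev_le_rev.2 hij)⟩

lemma sum_le_partSum_card {b : Fin n → ℕ} (hb : Nonincreasing b) (T : Finset (Fin n)) :
    ∑ t ∈ T, b t ≤ partSum b T.card := by
  induction T using Finset.induction_on_max with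
  | empty => simp
  | insert t T hlt ih =>
    have htT : t ∉ T := fun h => lt_irrefl t (hlt t h)
    have hT : T.card ≤ t := by
      simpa using card_le_card fun x hx => mem_Iio.2 (hlt x hx)
    have hsucc : partSum b (T.card + 1) = partSum b T.card + b ⟨T.card, by omega⟩ :=
      partSum_succ b ⟨T.card, by omega⟩
    have := hb ⟨T.card, by omega⟩ t (Fin.le_def.2 hT)
    rw [sum_insert htT, card_insert_of_notMem htT]
    omega

lemma partSum_le_partSum_comp {f : Fin n → ℕ} {σ : Equiv.Perm (Fin n)}
    (hσ : Nonincreasing (f ∘ σ)) (k : ℕ) : partSum f k ≤ partSum (f ∘ σ) k := by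
  set I := univ.filter fun i : Fin n => (i : ℕ) < k
  have hI : I.card ≤ k := by
    simpa using card_le_card_of_injOn (t := range k) (fun i : Fin n => (i : ℕ))
      (fun i hi => by simpa using (mem_filter.1 hi).2) Fin.val_injective.injOn
  calc partSum f k = ∑ i ∈ I, f i := (sum_filter _ _).symm
    _ = ∑ i ∈ I.map σ.symm.toEmbedding, (f ∘ σ) i := by simp [sum_map]
    _ ≤ partSum (f ∘ σ) (I.map σ.symm.toEmbedding).card := sum_le_partSum_card hσ _
    _ ≤ partSum (f ∘ σ) k := partSum_mono _ (by simpa using hI)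

lemma majorized_comp_perm {f : Fin n → ℕ} {σ : Equiv.Perm (Fin n)} (hσ : Nonincreasing (f ∘ σ)) :
    Majorized f (f ∘ σ) :=
  ⟨partSum_le_partSum_comp hσ, (Equiv.sum_comp σ f).symm⟩

end Sorting

section Transfer

variable {n : ℕ} {a b : Fin n → ℕ}

lemma exists_transfer_indices (hmaj : Majorized a b) (hne : a ≠ b) :
    ∃ p q : Fin n, p < q ∧ a p < b p ∧ b q < a q ∧ (∀ k, k < q → a k ≤ b k) ∧
      ∀ k, p < k → k < q → a k = b k := by
  have hQ : (univ.filter fun k => b k < a k).Nonempty := by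
    by_contra h
    simp only [not_nonempty_iff_eq_empty, filter_eq_empty_iff, mem_univ, true_implies,
      not_lt] at h
    exact hne (funext fun k => ((sum_eq_sum_iff_of_le fun i _ => @h i).1 hmaj.2 k (mem_univ k)))
  obtain ⟨q, hq, hqmin⟩ := exists_min_image _ id hQ
  simp only [mem_filter, mem_univ, true_and, id] at hq hqmin
  have hle : ∀ k, k < q → a k ≤ b k := fun k hk => not_lt.1 fun h => (hqmin k h).not_gt hk
  have hP : (univ.filter fun k => k < q ∧ a k < b k).Nonempty := by
    by_contra h
    simp only [not_nonempty_iff_eq_empty, filter_eq_empty_iff, mem_univ, true_implies,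
      not_and, not_lt] at h
    refine (hmaj.1 (q + 1)).not_gt (partSum_lt_partSum (fun i hi => ?_) (lt_add_one _) hq)
    rcases (Nat.lt_succ_iff.1 hi).lt_or_eq with hi | hi
    · exact @h i hi
    · exact (Fin.ext hi ▸ hq).le
  obtain ⟨p, hp, hpmax⟩ := exists_max_image _ id hP
  simp only [mem_filter, mem_univ, true_and, id] at hp hpmax
  exact ⟨p, q, hp.1, hp.2, hq, hle, fun k hpk hkq =>
    (hle k hkq).antisymm (not_lt.1 fun h => (hpmax k ⟨hkq, h⟩).not_gt hpk)⟩

lemma partSum_add_ite_of_unitTransfer {c : Fin n → ℕ} {p q : Fin n} (h : UnitTransfer b c p q)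
    (k : ℕ) :
    partSum c k + (if (p : ℕ) < k then 1 else 0) = partSum b k + if (q : ℕ) < k then 1 else 0 := by
  obtain ⟨hpq, hgap, rfl⟩ := h
  rw [← partSum_single, ← partSum_single, ← partSum_add, ← partSum_add]
  congr 1
  funext x
  by_cases hxq : x = q
  · subst hxq; simp [hpq.ne']
  by_cases hxp : x = p
  · subst hxp
    simp only [Pi.add_apply, Function.update_of_ne hpq.ne, Function.update_self,
      Pi.single_eq_same, Pi.single_eq_of_ne hpq.ne]
    omega
  simp [hxp, hxq]

lemma nonincreasing_update_update (hb : Nonincreasing b) {p q : Fin n} (hpq : p < q)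
    (hgap : b q + 2 ≤ b p) (hp : ∀ l, p < l → b l < b p) (hq : ∀ k, k < q → b q < b k) :
    Nonincreasing (Function.update (Function.update b p (b p - 1)) q (b q + 1)) := by
  intro k l hkl
  rcases hkl.eq_or_lt with rfl | hkl
  · exact le_rfl
  have := hb k l hkl.le
  simp only [Function.update_apply]
  split_ifs <;> subst_vars <;> grind

lemma Majorized.of_unitTransfer {c : Fin n → ℕ} {p q : Fin n} (hmaj : Majorized a b)
    (h : UnitTransfer b c p q) (hle : ∀ k, k < q → a k ≤ b k) (hp : a p < b p) :
    Majorized a c := by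
  have hsum := partSum_add_ite_of_unitTransfer h
  have hpq : (p : ℕ) < q := h.1
  refine ⟨fun k => ?_, ?_⟩
  · have h₁ := hsum k
    have h₂ := hmaj.1 k
    by_cases hpk : (p : ℕ) < k
    · by_cases hqk : (q : ℕ) < k
      · rw [if_pos hpk, if_pos hqk] at h₁
        omega
      have := partSum_lt_partSum (fun i hi => hle i (by omega)) hpk hp
      rw [if_pos hpk, if_neg hqk] at h₁
      omega
    · rw [if_neg hpk, if_neg (by omega)] at h₁
      omega
  · have := hsum n
    rw [if_pos p.2, if_pos q.2, partSum_of_le _ le_rfl, partSum_of_le _ le_rfl] at this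
    exact hmaj.2.trans (by omega)

def majorizationGap (a b : Fin n → ℕ) : ℕ := ∑ k ∈ range n, (partSum b k - partSum a k)

lemma exists_unitTransfer_of_majorized (ha : Nonincreasing a) (hb : Nonincreasing b)
    (hmaj : Majorized a b) (hne : a ≠ b) :
    ∃ c p q, UnitTransfer b c p q ∧ Nonincreasing c ∧ Majorized a c ∧
      majorizationGap a c < majorizationGap a b := by
  obtain ⟨p, q, hpq, hp, hq, hle, heq⟩ := exists_transfer_indices hmaj hne
  have hpq' : (p : ℕ) < q := hpq
  have hgap : b q + 2 ≤ b p := by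
    have := ha p q hpq.le
    omega
  have htr : UnitTransfer b _ p q := ⟨hpq, hgap, rfl⟩
  have hsum := partSum_add_ite_of_unitTransfer htr
  set c := Function.update (Function.update b p (b p - 1)) q (b q + 1)
  have hcb : ∀ k, partSum c k ≤ partSum b k := fun k => by
    have := hsum k
    split_ifs at this <;> omega
  have hac := hmaj.of_unitTransfer htr hle hp
  refine ⟨c, p, q, htr, nonincreasing_update_update hb hpq hgap (fun l hpl => ?_)
    (fun k hkq => ?_), hac, ?_⟩
  · rcases lt_trichotomy l q with hlq | rfl | hql
    · have := ha p l hpl.le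
      have := heq l hpl hlq
      omega
    · omega
    · have := hb q l hql.le
      omega
  · have := hle k hkq
    have := ha k q hkq.le
    omega
  · refine sum_lt_sum (fun k _ => Nat.sub_le_sub_right (hcb k) _)
      ⟨q, mem_range.2 q.2, ?_⟩
    have h₁ := hsum q
    rw [if_pos hpq', if_neg (lt_irrefl _)] at h₁
    have := hac.1 q
    omega

end Transfer

lemma Finset.sum_congr_of_pair {α β : Type*} [DecidableEq α] [AddCommMonoid β] {s : Finset α}
    {f g : α → β} {i j : α} (hi : i ∈ s) (hj : j ∈ s) (hij : i ≠ j)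
    (hpair : f i + f j = g i + g j) (hrest : ∀ l ∈ s, l ≠ i → l ≠ j → f l = g l) :
    ∑ l ∈ s, f l = ∑ l ∈ s, g l := by
  have hsub : {i, j} ⊆ s := by simp [insert_subset_iff, hi, hj]
  rw [← sum_sdiff hsub, ← sum_sdiff hsub (f := g), sum_pair hij, sum_pair hij, hpair]
  congr 1
  refine sum_congr rfl fun l hl => ?_
  simp only [mem_sdiff, mem_insert, mem_singleton, not_or] at hl
  exact hrest l hl.1 hl.2.1 hl.2.2

lemma Nat.choose_lt_choose_pred {r x : ℕ} (hx : x ≤ r) (h : r + 2 ≤ 2 * x) :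
    r.choose x < r.choose (x - 1) := by
  obtain ⟨y, rfl⟩ : ∃ y, x = y + 1 := ⟨x - 1, by omega⟩
  have key := Nat.choose_succ_right_eq r y
  have hpos : 0 < r.choose y := Nat.choose_pos (by omega)
  rw [Nat.add_sub_cancel]
  refine Nat.lt_of_mul_lt_mul_right (a := y + 1) ?_
  rw [key]
  exact Nat.mul_lt_mul_of_pos_left (by omega) hpos

lemma Finset.card_powerset_filter_eq_zero_or_lt {α : Type*} (R : Finset α) {w A B : ℕ}
    (hAB : B + 2 ≤ A) :
    (R.powerset.filter fun S => S.card + w = A ∧ B + S.card = R.card + w).card = 0 ∨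
      (R.powerset.filter fun S => S.card + w = A ∧ B + S.card = R.card + w).card <
        (R.powerset.filter fun S => S.card + w = A - 1 ∧ B + 1 + S.card = R.card + w).card := by
  refine or_iff_not_imp_left.2 fun hne => ?_
  obtain ⟨S₀, hS₀⟩ := card_pos.1 (Nat.pos_of_ne_zero hne)
  obtain ⟨hS₀R, hA, hB⟩ := mem_filter.1 hS₀
  have hx := card_le_card (mem_powerset.1 hS₀R)
  have hcard : ∀ {A' B' x}, A' = x + w → B' + x = R.card + w →
      (R.powerset.filter fun S => S.card + w = A' ∧ B' + S.card = R.card + w) =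
        R.powersetCard x := fun hA' hB' => by
    rw [powersetCard_eq_filter]
    exact filter_congr fun S _ => by omega
  rw [hcard (x := S₀.card) (by omega) (by omega), hcard (x := S₀.card - 1) (by omega) (by omega),
    card_powersetCard, card_powersetCard]
  exact Nat.choose_lt_choose_pred hx (by omega)

section Rewiring

variable {n : ℕ} (i j : Fin n)

def splitSet (M : Fin n → Fin n → Bool) : Finset (Fin n) :=
  univ.filter fun k => k ≠ i ∧ k ≠ j ∧ M k i ≠ M k j

def iSide (M : Fin n → Fin n → Bool) : Finset (Fin n) :=
  (splitSet i j M).filter fun k => M k i = true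

def outerDegree (M : Fin n → Fin n → Bool) (v : Fin n) : ℕ :=
  ∑ l ∈ (splitSet i j M)ᶜ, if M v l then 1 else 0

def rewire (M : Fin n → Fin n → Bool) (S : Finset (Fin n)) : Fin n → Fin n → Bool :=
  fun k l =>
    if k ∈ splitSet i j M ∧ (l = i ∨ l = j) then decide (k ∈ S ↔ l = i)
    else if l ∈ splitSet i j M ∧ (k = i ∨ k = j) then decide (l ∈ S ↔ k = i)
    else M k l

variable {i j}

lemma mem_splitSet {M : Fin n → Fin n → Bool} {k : Fin n} :
    k ∈ splitSet i j M ↔ k ≠ i ∧ k ≠ j ∧ M k i ≠ M k j := by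
  simp [splitSet]

lemma left_notMem_splitSet {M : Fin n → Fin n → Bool} : i ∉ splitSet i j M := by
  simp [splitSet]

lemma right_notMem_splitSet {M : Fin n → Fin n → Bool} : j ∉ splitSet i j M := by
  simp [splitSet]

variable {M : Fin n → Fin n → Bool} {S : Finset (Fin n)} {k l : Fin n}

lemma rewire_apply_mem_left (hk : k ∈ splitSet i j M) :
    rewire i j M S k i = decide (k ∈ S) := by
  simp [rewire, hk]

lemma rewire_apply_mem_right (hij : i ≠ j) (hk : k ∈ splitSet i j M) :
    rewire i j M S k j = decide (k ∉ S) := by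
  simp [rewire, hk, hij.symm]

lemma rewire_apply_of_notMem (hk : k ∉ splitSet i j M) (hl : l ∉ splitSet i j M) :
    rewire i j M S k l = M k l := by
  simp [rewire, hk, hl]

lemma rewire_apply_of_ne (hki : k ≠ i) (hkj : k ≠ j) (hli : l ≠ i) (hlj : l ≠ j) :
    rewire i j M S k l = M k l := by
  simp [rewire, hki, hkj, hli, hlj]

lemma rewire_symm (hsymm : ∀ k l, M k l = M l k) (k l : Fin n) :
    rewire i j M S k l = rewire i j M S l k := by
  unfold rewire
  split_ifs <;> grind [mem_splitSet]

lemma rewire_self (hdiag : ∀ k, M k k = false) (k : Fin n) : rewire i j M S k k = false := by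
  unfold rewire
  split_ifs <;> grind [mem_splitSet]

lemma splitSet_rewire (hij : i ≠ j) (M : Fin n → Fin n → Bool) (S : Finset (Fin n)) :
    splitSet i j (rewire i j M S) = splitSet i j M := by
  ext k
  by_cases hk : k ∈ splitSet i j M
  · have := mem_splitSet.1 hk
    simp only [hk, iff_true, mem_splitSet, rewire_apply_mem_left hk, rewire_apply_mem_right hij hk]
    grind
  · rw [mem_splitSet, rewire_apply_of_notMem hk left_notMem_splitSet,
      rewire_apply_of_notMem hk right_notMem_splitSet, ← mem_splitSet]

lemma rewire_rewire (hij : i ≠ j) (M : Fin n → Fin n → Bool) (S T : Finset (Fin n)) :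
    rewire i j (rewire i j M S) T = rewire i j M T := by
  funext k l
  simp only [rewire, splitSet_rewire hij]
  split_ifs <;> grind

lemma rewire_iSide (hsymm : ∀ k l, M k l = M l k) : rewire i j M (iSide i j M) = M := by
  funext k l
  unfold rewire
  split_ifs <;> grind [iSide, mem_splitSet]

lemma iSide_rewire (hij : i ≠ j) (hS : S ⊆ splitSet i j M) : iSide i j (rewire i j M S) = S := by
  ext k
  rw [iSide, splitSet_rewire hij, mem_filter]
  by_cases hk : k ∈ splitSet i j M
  · simp [rewire_apply_mem_left hk, hk]
  · exact ⟨fun h => absurd h.1 hk, fun h => absurd (hS h) hk⟩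

lemma rewire_left_apply_mem (hl : l ∈ splitSet i j M) : rewire i j M S i l = decide (l ∈ S) := by
  simp [rewire, hl, left_notMem_splitSet]

lemma rewire_right_apply_mem (hij : i ≠ j) (hl : l ∈ splitSet i j M) :
    rewire i j M S j l = decide (l ∉ S) := by
  simp [rewire, hl, right_notMem_splitSet, hij.symm]

lemma rowSum_rewire_of_ne (hij : i ≠ j) (hk : k ≠ i) (hk' : k ≠ j) :
    rowSum (rewire i j M S) k = rowSum M k := by
  refine sum_congr_of_pair (mem_univ i) (mem_univ j) hij ?_
    fun l _ hl hl' => by rw [rewire_apply_of_ne hk hk' hl hl']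
  by_cases hkR : k ∈ splitSet i j M
  · have := (mem_splitSet.1 hkR).2.2
    rw [rewire_apply_mem_left hkR, rewire_apply_mem_right hij hkR]
    by_cases hS : k ∈ S <;> cases h : M k i <;> simp_all
  · rw [rewire_apply_of_notMem hkR left_notMem_splitSet,
      rewire_apply_of_notMem hkR right_notMem_splitSet]

lemma rowSum_rewire_left (hS : S ⊆ splitSet i j M) :
    rowSum (rewire i j M S) i = S.card + outerDegree i j M i := by
  rw [rowSum, ← sum_add_sum_compl (splitSet i j M), outerDegree]
  congr 1
  · rw [sum_congr rfl fun l hl => by rw [rewire_left_apply_mem hl]]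
    simp only [decide_eq_true_eq, sum_boole, Nat.cast_id, filter_mem_eq_inter,
      inter_eq_right.2 hS]
  · exact sum_congr rfl fun l hl => by
      rw [rewire_apply_of_notMem left_notMem_splitSet (mem_compl.1 hl)]

lemma rowSum_rewire_right (hij : i ≠ j) (hS : S ⊆ splitSet i j M) :
    rowSum (rewire i j M S) j + S.card = (splitSet i j M).card + outerDegree i j M j := by
  rw [rowSum, ← sum_add_sum_compl (splitSet i j M), outerDegree]
  have hcompl : ∑ l ∈ (splitSet i j M)ᶜ, (if rewire i j M S j l then 1 else 0)
      = ∑ l ∈ (splitSet i j M)ᶜ, if M j l then 1 else 0 :=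
    sum_congr rfl fun l hl => by
      rw [rewire_apply_of_notMem right_notMem_splitSet (mem_compl.1 hl)]
  rw [hcompl, sum_congr rfl fun l hl => by rw [rewire_right_apply_mem hij hl]]
  simp only [decide_eq_true_eq, sum_boole, Nat.cast_id, filter_not, filter_mem_eq_inter,
    inter_eq_right.2 hS, card_sdiff_of_subset hS]
  have := card_le_card hS
  omega

lemma outerDegree_left_eq_right (hij : i ≠ j) (hsymm : ∀ k l, M k l = M l k)
    (hdiag : ∀ k, M k k = false) : outerDegree i j M i = outerDegree i j M j := by
  refine sum_congr_of_pair (mem_compl.2 left_notMem_splitSet)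
    (mem_compl.2 right_notMem_splitSet) hij ?_ fun l hl hli hlj => ?_
  · simp [hdiag, hsymm i j]
  · have : M l i = M l j := by
      by_contra h
      exact mem_compl.1 hl (mem_splitSet.2 ⟨hli, hlj, h⟩)
    rw [hsymm i, hsymm j, this]

end Rewiring

section Counting

variable {n : ℕ}

def realizations (d : Fin n → ℕ) : Finset (Fin n → Fin n → Bool) :=
  univ.filter fun M => (∀ i j, M i j = M j i) ∧ (∀ i, M i i = false) ∧ ∀ i, rowSum M i = d i

lemma N3_eq_card_realizations (d : Fin n → ℕ) : N3 d = (realizations d).card := by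
  rw [N3, Nat.card_eq_fintype_card, Fintype.card_subtype, realizations]

lemma rowSum_conj (M : Fin n → Fin n → Bool) (σ : Equiv.Perm (Fin n)) (k : Fin n) :
    rowSum (fun x y => M (σ x) (σ y)) k = rowSum M (σ k) :=
  Equiv.sum_comp σ fun l => if M (σ k) l then 1 else 0

lemma N3_comp_perm (d : Fin n → ℕ) (σ : Equiv.Perm (Fin n)) : N3 (d ∘ σ) = N3 d := by
  refine Nat.card_congr
    { toFun := fun M => ⟨fun k l => M.1 (σ.symm k) (σ.symm l), fun k l => M.2.1 _ _,
        fun k => M.2.2.1 _, fun k => by simp [rowSum_conj M.1 σ.symm k, M.2.2.2]⟩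
      invFun := fun M => ⟨fun k l => M.1 (σ k) (σ l), fun k l => M.2.1 _ _,
        fun k => M.2.2.1 _, fun k => by simp [rowSum_conj M.1 σ k, M.2.2.2]⟩
      left_inv := fun M => by simp
      right_inv := fun M => by simp }

variable {i j : Fin n}

lemma eq_rewire_iSide_of_rewire_empty_eq (hij : i ≠ j) {M M₀ : Fin n → Fin n → Bool}
    (hsymm : ∀ k l, M k l = M l k) (h : rewire i j M ∅ = rewire i j M₀ ∅) :
    rewire i j M₀ (iSide i j M) = M := by
  rw [← rewire_rewire hij M₀ ∅, ← h, rewire_rewire hij, rewire_iSide hsymm]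

lemma splitSet_eq_of_rewire_empty_eq (hij : i ≠ j) {M M₀ : Fin n → Fin n → Bool}
    (h : rewire i j M ∅ = rewire i j M₀ ∅) : splitSet i j M = splitSet i j M₀ := by
  rw [← splitSet_rewire hij M ∅, h, splitSet_rewire hij]

lemma card_realizations_filter_rewire_empty_eq (hij : i ≠ j) {M₀ : Fin n → Fin n → Bool}
    (hsymm₀ : ∀ k l, M₀ k l = M₀ l k) (hdiag₀ : ∀ k, M₀ k k = false)
    {d : Fin n → ℕ} (hd : ∀ k, k ≠ i → k ≠ j → rowSum M₀ k = d k) :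
    ((realizations d).filter fun M => rewire i j M ∅ = rewire i j M₀ ∅).card =
      ((splitSet i j M₀).powerset.filter fun S => S.card + outerDegree i j M₀ i = d i ∧
        d j + S.card = (splitSet i j M₀).card + outerDegree i j M₀ j).card := by
  refine card_bij' (fun M _ => iSide i j M) (fun S _ => rewire i j M₀ S) ?_ ?_ ?_ ?_
  · intro M hM
    simp only [realizations, mem_filter, mem_univ, true_and] at hM
    obtain ⟨⟨hsymm, -, hrow⟩, hframe⟩ := hM
    have hsub : iSide i j M ⊆ splitSet i j M₀ :=
      splitSet_eq_of_rewire_empty_eq hij hframe ▸ filter_subset _ _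
    have hM := eq_rewire_iSide_of_rewire_empty_eq hij hsymm hframe
    refine mem_filter.2 ⟨mem_powerset.2 hsub, ?_, ?_⟩
    · rw [← hrow i, ← rowSum_rewire_left hsub, hM]
    · rw [← hrow j, ← rowSum_rewire_right hij hsub, hM]
  · intro S hS
    obtain ⟨hS, hi, hj⟩ := mem_filter.1 hS
    have hS := mem_powerset.1 hS
    have hrow : ∀ k, rowSum (rewire i j M₀ S) k = d k := by
      intro k
      by_cases hki : k = i
      · rw [hki, rowSum_rewire_left hS, hi]
      by_cases hkj : k = j
      · have := rowSum_rewire_right (S := S) hij hS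
        rw [hkj]
        omega
      rw [rowSum_rewire_of_ne hij hki hkj, hd k hki hkj]
    exact mem_filter.2 ⟨mem_filter.2 ⟨mem_univ _, rewire_symm hsymm₀, rewire_self hdiag₀, hrow⟩,
      rewire_rewire hij _ _ _⟩
  · intro M hM
    simp only [realizations, mem_filter, mem_univ, true_and] at hM
    exact eq_rewire_iSide_of_rewire_empty_eq hij hM.1.1 hM.2
  · intro S hS
    exact iSide_rewire hij (mem_powerset.1 (mem_filter.1 hS).1)

lemma N3_eq_zero_or_lt_of_unitTransfer {b c : Fin n → ℕ} {p q : Fin n}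
    (h : UnitTransfer b c p q) : N3 b = 0 ∨ N3 b < N3 c := by
  obtain ⟨hpq, hgap, hc⟩ := h
  have hne : p ≠ q := hpq.ne
  have hcp : c p = b p - 1 := by simp [hc, hne]
  have hcq : c q = b q + 1 := by simp [hc]
  have hc_of_ne : ∀ k, k ≠ p → k ≠ q → c k = b k := fun k hkp hkq => by simp [hc, hkp, hkq]
  set t := (realizations b ∪ realizations c).image fun M => rewire p q M ∅
  have hfiber : ∀ F ∈ t,
      ((realizations b).filter fun M => rewire p q M ∅ = F).card = 0 ∨
        ((realizations b).filter fun M => rewire p q M ∅ = F).card <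
          ((realizations c).filter fun M => rewire p q M ∅ = F).card := by
    intro F hF
    obtain ⟨M₀, hM₀, rfl⟩ := mem_image.1 hF
    obtain ⟨hsymm, hdiag, hrow⟩ : (∀ k l, M₀ k l = M₀ l k) ∧ (∀ k, M₀ k k = false) ∧
        ∀ k, k ≠ p → k ≠ q → rowSum M₀ k = b k := by
      rcases mem_union.1 hM₀ with hM₀ | hM₀ <;>
        obtain ⟨-, hsymm, hdiag, hrow⟩ := mem_filter.1 hM₀
      · exact ⟨hsymm, hdiag, fun k _ _ => hrow k⟩
      · exact ⟨hsymm, hdiag, fun k hkp hkq => (hrow k).trans (hc_of_ne k hkp hkq)⟩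
    rw [card_realizations_filter_rewire_empty_eq hne hsymm hdiag hrow,
      card_realizations_filter_rewire_empty_eq hne hsymm hdiag
        fun k hkp hkq => (hrow k hkp hkq).trans (hc_of_ne k hkp hkq).symm,
      hcp, hcq, ← outerDegree_left_eq_right hne hsymm hdiag]
    exact card_powerset_filter_eq_zero_or_lt _ hgap
  rw [N3_eq_card_realizations, N3_eq_card_realizations,
    card_eq_sum_card_fiberwise (t := t) fun M hM => mem_image_of_mem _ (mem_union_left _ hM),
    card_eq_sum_card_fiberwise (t := t) fun M hM => mem_image_of_mem _ (mem_union_right _ hM)]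
  refine or_iff_not_imp_left.2 fun hb => ?_
  obtain ⟨F, hF, hF0⟩ := exists_ne_zero_of_sum_ne_zero hb
  exact sum_lt_sum (fun F hF => (hfiber F hF).elim (fun h => h ▸ Nat.zero_le _) le_of_lt)
    ⟨F, hF, (hfiber F hF).resolve_left hF0⟩

end Counting

lemma N3_lt_of_majorized {n : ℕ} {a b : Fin n → ℕ} (ha : Nonincreasing a) (hg : 0 < N3 a)
    (hb : Nonincreasing b) (hmaj : Majorized a b) (hne : a ≠ b) : N3 b < N3 a := by
  induction hgap : majorizationGap a b using Nat.strong_induction_on generalizing b with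
  | _ m ih =>
    obtain ⟨c, p, q, hbc, hc, hmajc, hlt⟩ := exists_unitTransfer_of_majorized ha hb hmaj hne
    rcases N3_eq_zero_or_lt_of_unitTransfer hbc with hb0 | hbc
    · omega
    by_cases hac : a = c
    · exact hac ▸ hbc
    · exact hbc.trans (ih _ (hgap ▸ hlt) hc hmajc hac rfl)

theorem stmt19 {n : ℕ} (a a' : Fin n → ℕ)
    (hmono : Nonincreasing a) (hg : Graphic a)
    (hmaj : Majorized a a') (hne : a ≠ a') :
    N3 a' < N3 a := by
  obtain ⟨σ, hσ⟩ := exists_perm_nonincreasing a'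
  have hsort : Majorized a' (a' ∘ σ) := majorized_comp_perm hσ
  rw [← N3_comp_perm a' σ]
  exact N3_lt_of_majorized hmono hg hσ (hmaj.trans hsort)
    fun h => hne (hmaj.antisymm (h ▸ hsort))
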